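/- arXiv:1106.2424 — 2 statements merged into one kernel-verified Lean document; each statement's English description precedes it below -/
import Mathlib

section
/- Let w₀ be the longest element of a finite standard parabolic subgroup P of W, and assume that the degree of f_{w,u,v} as a polynomial in ξ is at most l(w₀) for all w, u, v ∈ W. Then for every x ∈ W with l(x w₀) = l(x) − l(w₀), the polynomial f_{x^{-1}, x, w₀} has degree exactly l(w₀) in ξ; in particular f_{x^{-1}, x, w₀} ≠ 0. -/
/-!
The Hecke algebra `H` of a Coxeter system `(W, S)` over `A = ℤ[q^{1/2}, q^{-1/2}]`.
We model `A` as `LaurentPolynomial ℤ`, with the Laurent variable `T 1` playing the role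
of `q^{1/2}` (so `q = T 2`).  The Hecke algebra is axiomatized as an `A`-algebra `H`
together with an `A`-basis `TT = (T_w)_{w ∈ W}` satisfying the defining relations
`(T_s - q)(T_s + 1) = 0` and `T_w T_u = T_{wu}` whenever `l(wu) = l(w) + l(u)`
(and `T_1 = 1`).
-/

noncomputable section

/-- `q = (q^{1/2})^2` in `A = ℤ[q^{1/2}, q^{-1/2}]`. -/
def heckeQ : LaurentPolynomial ℤ := LaurentPolynomial.T 2

/-- `ξ = q^{1/2} - q^{-1/2}` in `A = ℤ[q^{1/2}, q^{-1/2}]`. -/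
def heckeXi : LaurentPolynomial ℤ := LaurentPolynomial.T 1 - LaurentPolynomial.T (-1)

variable {B W H : Type*} [Group W] [Ring H] [Algebra (LaurentPolynomial ℤ) H]
  {M : CoxeterMatrix B}

/-- The hypothesis that `TT` is the standard basis `(T_w)_{w ∈ W}` of the Hecke algebra `H`
of the Coxeter system `cs`. -/
def IsHeckeBasis (cs : CoxeterSystem M W) (TT : Module.Basis W (LaurentPolynomial ℤ) H) : Prop :=
  TT 1 = 1 ∧
  (∀ i : B, (TT (cs.simple i) - algebraMap (LaurentPolynomial ℤ) H heckeQ) *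
    (TT (cs.simple i) + 1) = 0) ∧
  (∀ w u : W, cs.length (w * u) = cs.length w + cs.length u → TT w * TT u = TT (w * u))

/-- `T̃_w = q^{-l(w)/2} T_w`. -/
def Ttilde (cs : CoxeterSystem M W) (TT : Module.Basis W (LaurentPolynomial ℤ) H) (w : W) : H :=
  (LaurentPolynomial.T (-(cs.length w : ℤ)) : LaurentPolynomial ℤ) • TT w

/-- The structure constants `f_{w,u,v} ∈ A` defined by `T̃_w T̃_u = Σ_v f_{w,u,v} T̃_v`;
equivalently, `f_{w,u,v}` is `q^{l(v)/2}` times the coordinate of `T̃_w T̃_u` at `T_v`. -/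
def heckeF (cs : CoxeterSystem M W) (TT : Module.Basis W (LaurentPolynomial ℤ) H) (w u v : W) :
    LaurentPolynomial ℤ :=
  (LaurentPolynomial.T (cs.length v : ℤ) : LaurentPolynomial ℤ) *
    TT.repr (Ttilde cs TT w * Ttilde cs TT u) v

end

/-!
Expand everything in the basis `T̃_v`. The `T̃_v`-coordinate of `h T̃_s` is the `T̃_{vs}`-coordinate
of `h`, plus `ξ` times its `T̃_v`-coordinate when `vs < v`; hence every `f_{w,u,v}` is a polynomial
in `ξ` with coefficients in `ℕ`, and no cancellation can occur below.

If `x = s x'` with `s` a left descent of `x w₀`, then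
`T̃_{x⁻¹} T̃_x = T̃_{x'⁻¹} T̃_{x'} + ξ T̃_{x⁻¹} T̃_{x'}`, so by induction the coefficient of
`ξ^{l(w₀)}` in `f_{x⁻¹,x,w₀}` is positive as soon as it is positive in `f_{w₀,w₀⁻¹,w₀}`.
For the latter, take a reduced word for `w₀⁻¹` in the generators of `P` (it exists by the exchange
property, proved with Tits' sign representation): each of its letters is a right descent of `w₀`,
so each step multiplies the `T̃_{w₀}`-coordinate by `ξ` up to terms with coefficients in `ℕ`.

Since `p ↦ p(ξ)` is injective on `ℤ[X]`, this expansion is the given one of degree at most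
`l(w₀)`, whose degree is therefore exactly `l(w₀)`.
-/

namespace CoxeterSystem

open scoped Classical in
noncomputable def reflectionSign {W : Type*} (t w : W) : ℤˣ := if w = t then -1 else 1

theorem reflectionSign_self {W : Type*} (t : W) : reflectionSign t t = -1 := by
  simp [reflectionSign]

theorem reflectionSign_of_ne {W : Type*} {t w : W} (h : w ≠ t) : reflectionSign t w = 1 := by
  simp [reflectionSign, h]

variable {B W : Type*} [Group W] {M : CoxeterMatrix B} (cs : CoxeterSystem M W)

theorem reflectionSign_conj (u t w : W) :
    reflectionSign t (u * w * u⁻¹) = reflectionSign (u⁻¹ * t * u) w := by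
  by_cases h : w = u⁻¹ * t * u
  · subst h
    rw [reflectionSign_self, show u * (u⁻¹ * t * u) * u⁻¹ = t by group, reflectionSign_self]
  · rw [reflectionSign_of_ne h, reflectionSign_of_ne]
    rintro rfl
    exact h (by group)

noncomputable def titsPerm (i : B) : Equiv.Perm (W × ℤˣ) :=
  Function.Involutive.toPerm
    (fun p => (cs.simple i * p.1 * (cs.simple i)⁻¹, p.2 * reflectionSign (cs.simple i) p.1))
    (by
      rintro ⟨w, ε⟩
      refine Prod.ext ?_ ?_
      · simp [cs.inv_simple, mul_assoc, cs.simple_mul_simple_self,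
          cs.simple_mul_simple_cancel_left]
      · change ε * _ * reflectionSign _ (cs.simple i * w * (cs.simple i)⁻¹) = ε
        rw [reflectionSign_conj, inv_mul_cancel, one_mul, mul_assoc, Int.units_mul_self,
          mul_one])

theorem titsPerm_apply (i : B) (w : W) (ε : ℤˣ) :
    cs.titsPerm i (w, ε)
      = (cs.simple i * w * (cs.simple i)⁻¹, ε * reflectionSign (cs.simple i) w) := rfl

theorem titsPerm_mul_titsPerm_apply (i i' : B) (w : W) (ε : ℤˣ) :
    (cs.titsPerm i * cs.titsPerm i') (w, ε)
      = ((cs.simple i' * cs.simple i)⁻¹ * w * (cs.simple i' * cs.simple i),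
          ε * ∏ k ∈ Finset.range 2,
            reflectionSign ((cs.simple i' * cs.simple i) ^ k * cs.simple i') w) := by
  rw [Equiv.Perm.mul_apply, titsPerm_apply, titsPerm_apply, reflectionSign_conj,
    Finset.prod_range_succ, Finset.prod_range_one]
  simp only [mul_inv_rev, cs.inv_simple, pow_zero, one_mul, pow_one, mul_assoc]

theorem conj_pow_mul_simple (i i' : B) (k : ℕ) :
    (cs.simple i' * cs.simple i) * ((cs.simple i' * cs.simple i) ^ k * cs.simple i')
        * (cs.simple i' * cs.simple i)⁻¹
      = (cs.simple i' * cs.simple i) ^ (k + 2) * cs.simple i' := by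
  have h : cs.simple i' * (cs.simple i' * cs.simple i)⁻¹
      = (cs.simple i' * cs.simple i) * cs.simple i' := by
    rw [mul_inv_rev, cs.inv_simple, cs.inv_simple, mul_assoc]
  generalize cs.simple i' * cs.simple i = d at h ⊢
  simp only [mul_assoc, h]
  rw [← mul_assoc (d ^ k), ← pow_succ, ← mul_assoc, ← pow_succ']

theorem titsPerm_mul_titsPerm_pow_apply (i i' : B) (r : ℕ) (w : W) (ε : ℤˣ) :
    ((cs.titsPerm i * cs.titsPerm i') ^ r) (w, ε)
      = ((cs.simple i' * cs.simple i)⁻¹ ^ r * w * (cs.simple i' * cs.simple i) ^ r,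
          ε * ∏ k ∈ Finset.range (2 * r),
            reflectionSign ((cs.simple i' * cs.simple i) ^ k * cs.simple i') w) := by
  induction r generalizing w ε with
  | zero => simp
  | succ r ih =>
    rw [pow_succ, Equiv.Perm.mul_apply, titsPerm_mul_titsPerm_apply, ih, mul_add_one,
      add_comm _ 2, Finset.prod_range_add, mul_assoc ε]
    refine Prod.ext ?_ ?_
    · simp only
      generalize cs.simple i' * cs.simple i = d
      group
    simp only
    congr 2
    refine Finset.prod_congr rfl fun k _ => ?_
    rw [← inv_inv (cs.simple i' * cs.simple i), inv_inv (_)⁻¹, reflectionSign_conj, inv_inv,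
      conj_pow_mul_simple, add_comm]

theorem isLiftable_titsPerm : M.IsLiftable cs.titsPerm := by
  intro i i'
  ext1 ⟨w, ε⟩
  have hper : ∀ k, (cs.simple i' * cs.simple i) ^ (M i i' + k)
      = (cs.simple i' * cs.simple i) ^ k := fun k => by
    rw [pow_add, simple_mul_simple_pow', one_mul]
  rw [titsPerm_mul_titsPerm_pow_apply, inv_pow, simple_mul_simple_pow', two_mul,
    Finset.prod_range_add]
  simp [hper, Int.units_mul_self]

noncomputable def titsRep : W →* Equiv.Perm (W × ℤˣ) :=
  cs.lift ⟨cs.titsPerm, cs.isLiftable_titsPerm⟩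

theorem titsRep_simple (i : B) : cs.titsRep (cs.simple i) = cs.titsPerm i :=
  cs.lift_apply_simple cs.isLiftable_titsPerm i

theorem titsRep_wordProd_apply (ω : List B) (w : W) (ε : ℤˣ) :
    cs.titsRep (cs.wordProd ω) (w, ε)
      = (cs.wordProd ω * w * (cs.wordProd ω)⁻¹,
          ε * ((cs.rightInvSeq ω).map (reflectionSign · w)).prod) := by
  induction ω with
  | nil => simp [rightInvSeq]
  | cons i ω ih =>
    rw [cs.wordProd_cons, map_mul, Equiv.Perm.mul_apply, ih, titsRep_simple, titsPerm_apply,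
      reflectionSign_conj]
    refine Prod.ext (by simp only [mul_inv_rev, mul_assoc]) ?_
    simp only [rightInvSeq, List.map_cons, List.prod_cons]
    rw [mul_assoc, mul_comm (List.prod _)]

theorem prod_map_reflectionSign_eq_one {ω : List B} {t : W} (ht : t ∉ cs.rightInvSeq ω) :
    ((cs.rightInvSeq ω).map (reflectionSign · t)).prod = 1 :=
  List.prod_eq_one fun _ hx => by
    obtain ⟨t', ht', rfl⟩ := List.mem_map.mp hx
    exact reflectionSign_of_ne fun h => ht (h ▸ ht')

/-- If `s i` is a right descent of `w`, then `s i` appears in the right inversion sequence of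
every word for `w`: evaluate `titsRep w` at `(s i, 1)` along such a word and along a reduced
word for `w * s i` followed by `i`. -/
theorem simple_mem_rightInvSeq_of_isRightDescent {ω : List B} {i : B}
    (hi : cs.IsRightDescent (cs.wordProd ω) i) : cs.simple i ∈ cs.rightInvSeq ω := by
  by_contra hmem
  obtain ⟨ω', hω', hω'_eq⟩ := cs.exists_isReduced (cs.wordProd ω * cs.simple i)
  have hmem' : cs.simple i ∉ cs.rightInvSeq ω' := fun h => by
    have := (cs.isRightInversion_of_mem_rightInvSeq hω' h).2
    rw [← hω'_eq, cs.simple_mul_simple_cancel_right] at this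
    exact lt_asymm hi this
  have hsplit : cs.wordProd ω = cs.wordProd ω' * cs.simple i := by
    rw [← hω'_eq, cs.simple_mul_simple_cancel_right]
  have h := congrArg Prod.snd (cs.titsRep_wordProd_apply ω (cs.simple i) 1)
  rw [hsplit, map_mul, Equiv.Perm.mul_apply, titsRep_simple, titsPerm_apply, reflectionSign_self,
    titsRep_wordProd_apply, mul_inv_cancel_right, cs.prod_map_reflectionSign_eq_one hmem',
    cs.prod_map_reflectionSign_eq_one hmem] at h
  simp at h

/-- The exchange property. -/
theorem exists_eraseIdx_eq_mul_simple {ω : List B} {i : B}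
    (hi : cs.IsRightDescent (cs.wordProd ω) i) :
    ∃ j < ω.length, cs.wordProd (ω.eraseIdx j) = cs.wordProd ω * cs.simple i := by
  obtain ⟨j, hj, hj_eq⟩ := List.mem_iff_getElem.mp (cs.simple_mem_rightInvSeq_of_isRightDescent hi)
  rw [cs.length_rightInvSeq] at hj
  refine ⟨j, hj, ?_⟩
  rw [← cs.wordProd_mul_getD_rightInvSeq, List.getD_eq_getElem _ _ (by simpa using hj), hj_eq]

theorem exists_isReduced_mul_simple {ω : List B} (hω : cs.IsReduced ω) (i : B) :
    ∃ ω', cs.IsReduced ω' ∧ ω'.Sublist (ω ++ [i]) ∧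
      cs.wordProd ω' = cs.wordProd ω * cs.simple i := by
  rcases cs.length_mul_simple (cs.wordProd ω) i with hasc | hdesc
  · refine ⟨ω ++ [i], ?_, List.Sublist.refl _, by rw [cs.wordProd_append, cs.wordProd_singleton]⟩
    rw [IsReduced, cs.wordProd_append, cs.wordProd_singleton, hasc, hω.eq, List.length_append,
      List.length_singleton]
  · obtain ⟨j, hj, hj_eq⟩ := cs.exists_eraseIdx_eq_mul_simple (ω := ω) (i := i) (by
      rw [IsRightDescent]; omega)
    refine ⟨ω.eraseIdx j, ?_, (List.eraseIdx_sublist ω j).trans (List.sublist_append_left _ _),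
      hj_eq⟩
    rw [IsReduced, hj_eq, List.length_eraseIdx_of_lt hj, ← hω.eq]
    omega

theorem exists_isReduced_of_mem_closure {I : Set B} {w : W}
    (hw : w ∈ Subgroup.closure (cs.simple '' I)) :
    ∃ ω, cs.IsReduced ω ∧ (∀ i ∈ ω, i ∈ I) ∧ cs.wordProd ω = w := by
  have step : ∀ x y, y ∈ cs.simple '' I →
      (∃ ω, cs.IsReduced ω ∧ (∀ i ∈ ω, i ∈ I) ∧ cs.wordProd ω = x) →
      ∃ ω, cs.IsReduced ω ∧ (∀ i ∈ ω, i ∈ I) ∧ cs.wordProd ω = x * y := by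
    rintro x _ ⟨i, hi, rfl⟩ ⟨ω, hω, hωI, rfl⟩
    obtain ⟨ω', hω', hsub, hω'_eq⟩ := cs.exists_isReduced_mul_simple hω i
    refine ⟨ω', hω', fun k hk => ?_, hω'_eq⟩
    rcases List.mem_append.mp (hsub.subset hk) with hk | hk
    · exact hωI k hk
    · rwa [List.mem_singleton.mp hk]
  induction hw using Subgroup.closure_induction_right with
  | one => exact ⟨[], by simp [IsReduced], by simp, rfl⟩
  | mul_right x _ y hy ih => exact step x y hy ih
  | mul_inv_cancel x _ y hy ih =>
    obtain ⟨i, hi, rfl⟩ := hy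
    rw [cs.inv_simple]
    exact step x _ ⟨i, hi, rfl⟩ ih

end CoxeterSystem

section XiExpansion

open Polynomial LaurentPolynomial

theorem coeff_heckeXi_pow (k : ℕ) {n : ℤ} (hn : (k : ℤ) ≤ n) :
    (heckeXi ^ k).coeff n = if n = k then 1 else 0 := by
  induction k generalizing n with
  | zero => simp [← T_zero, eq_comm]
  | succ k ih =>
    have hcoeff : (heckeXi ^ (k + 1)).coeff n
        = (heckeXi ^ k).coeff (n - 1) - (heckeXi ^ k).coeff (n + 1) := by
      rw [pow_succ, heckeXi, mul_sub, AddMonoidAlgebra.coeff_sub, Finsupp.sub_apply, T,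
        AddMonoidAlgebra.coeff_mul_single_apply, T, AddMonoidAlgebra.coeff_mul_single_apply]
      simp [sub_eq_add_neg]
    rw [hcoeff, ih (by omega), ih (by omega)]
    push_cast
    split_ifs <;> omega

theorem coeff_aeval_heckeXi_natDegree (p : ℤ[X]) :
    (aeval heckeXi p).coeff p.natDegree = p.leadingCoeff := by
  rw [aeval_eq_sum_range, Finset.sum_range_succ, AddMonoidAlgebra.coeff_add, Finsupp.add_apply,
    AddMonoidAlgebra.coeff_sum, Finset.sum_apply', Finset.sum_eq_zero fun i hi => ?_]
  · rw [AddMonoidAlgebra.coeff_smul_apply, coeff_heckeXi_pow _ le_rfl, if_pos rfl, smul_eq_mul,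
      mul_one, zero_add, leadingCoeff]
  · have hi : i < p.natDegree := Finset.mem_range.mp hi
    rw [AddMonoidAlgebra.coeff_smul_apply, coeff_heckeXi_pow _ (by omega), if_neg (by omega),
      smul_zero]

theorem aeval_heckeXi_injective : Function.Injective (aeval (R := ℤ) heckeXi) := by
  refine (injective_iff_map_eq_zero _).mpr fun p hp => ?_
  rw [← leadingCoeff_eq_zero, ← coeff_aeval_heckeXi_natDegree, hp]
  rfl

end XiExpansion

section XiPositivity

open Polynomial

def NonnegInXi (f : LaurentPolynomial ℤ) : Prop := ∃ p : ℕ[X], aeval heckeXi p = f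

def PosCoeffInXi (k : ℕ) (f : LaurentPolynomial ℤ) : Prop :=
  ∃ p : ℕ[X], 0 < p.coeff k ∧ aeval heckeXi p = f

theorem NonnegInXi.zero : NonnegInXi 0 := ⟨0, map_zero _⟩

theorem NonnegInXi.one : NonnegInXi 1 := ⟨1, map_one _⟩

theorem NonnegInXi.add {f g : LaurentPolynomial ℤ} (hf : NonnegInXi f) (hg : NonnegInXi g) :
    NonnegInXi (f + g) := by
  obtain ⟨p, rfl⟩ := hf
  obtain ⟨q, rfl⟩ := hg
  exact ⟨p + q, map_add _ _ _⟩

theorem NonnegInXi.heckeXi_mul {f : LaurentPolynomial ℤ} (hf : NonnegInXi f) :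
    NonnegInXi (heckeXi * f) := by
  obtain ⟨p, rfl⟩ := hf
  exact ⟨X * p, by rw [map_mul, aeval_X]⟩

theorem posCoeffInXi_zero_one : PosCoeffInXi 0 1 := ⟨1, by simp, map_one _⟩

theorem PosCoeffInXi.add_nonnegInXi {k : ℕ} {f g : LaurentPolynomial ℤ} (hf : PosCoeffInXi k f)
    (hg : NonnegInXi g) : PosCoeffInXi k (f + g) := by
  obtain ⟨p, hp, rfl⟩ := hf
  obtain ⟨q, rfl⟩ := hg
  exact ⟨p + q, by rw [coeff_add]; omega, map_add _ _ _⟩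

theorem PosCoeffInXi.heckeXi_mul {k : ℕ} {f : LaurentPolynomial ℤ} (hf : PosCoeffInXi k f) :
    PosCoeffInXi (k + 1) (heckeXi * f) := by
  obtain ⟨p, hp, rfl⟩ := hf
  exact ⟨X * p, by rwa [coeff_X_mul], by rw [map_mul, aeval_X]⟩

theorem PosCoeffInXi.exists_int {k : ℕ} {f : LaurentPolynomial ℤ} (hf : PosCoeffInXi k f) :
    ∃ p : ℤ[X], 0 < p.coeff k ∧ aeval heckeXi p = f := by
  obtain ⟨p, hp, rfl⟩ := hf
  exact ⟨p.map (algebraMap ℕ ℤ), by simpa using hp, aeval_map_algebraMap ℤ _ _⟩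

theorem PosCoeffInXi.ne_zero {k : ℕ} {f : LaurentPolynomial ℤ} (hf : PosCoeffInXi k f) :
    f ≠ 0 := by
  obtain ⟨p, hp, rfl⟩ := hf.exists_int
  refine (map_ne_zero_iff _ aeval_heckeXi_injective).mpr fun h => ?_
  simp [h] at hp

theorem PosCoeffInXi.degree_eq {k : ℕ} {f : LaurentPolynomial ℤ} (hf : PosCoeffInXi k f)
    {p : ℤ[X]} (hp : p.natDegree ≤ k) (hpf : aeval heckeXi p = f) : p.degree = k := by
  obtain ⟨q, hq, rfl⟩ := hf.exists_int
  obtain rfl := aeval_heckeXi_injective hpf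
  exact le_antisymm (degree_le_of_natDegree_le hp) (le_degree_of_ne_zero hq.ne')

end XiPositivity

section HeckeAlgebra

open LaurentPolynomial

variable {B W H : Type*} [Group W] [Ring H] [Algebra (LaurentPolynomial ℤ) H]
  {M : CoxeterMatrix B} (cs : CoxeterSystem M W) (TT : Module.Basis W (LaurentPolynomial ℤ) H)

theorem Ttilde_one (hT : IsHeckeBasis cs TT) : Ttilde cs TT 1 = 1 := by
  rw [Ttilde, cs.length_one, hT.1, Nat.cast_zero, neg_zero, T_zero, one_smul]

theorem Ttilde_mul_Ttilde (hT : IsHeckeBasis cs TT) {w u : W}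
    (h : cs.length (w * u) = cs.length w + cs.length u) :
    Ttilde cs TT w * Ttilde cs TT u = Ttilde cs TT (w * u) := by
  rw [Ttilde, Ttilde, Ttilde, smul_mul_smul_comm, hT.2.2 w u h, h, ← T_add]
  push_cast
  ring_nf

theorem Ttilde_simple_mul_self (hT : IsHeckeBasis cs TT) (i : B) :
    Ttilde cs TT (cs.simple i) * Ttilde cs TT (cs.simple i)
      = 1 + heckeXi • Ttilde cs TT (cs.simple i) := by
  have hrel := hT.2.1 i
  have hut : (T (-1) * T 1 : LaurentPolynomial ℤ) = 1 := by rw [← T_add]; rfl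
  rw [heckeQ, show (2 : ℤ) = 1 + 1 from rfl, T_add, Algebra.algebraMap_eq_smul_one] at hrel
  simp only [sub_mul, mul_add, mul_one, smul_mul_assoc, one_mul] at hrel
  rw [Ttilde, cs.length_simple, Nat.cast_one, heckeXi, smul_mul_smul_comm]
  linear_combination (norm := module) (T (-1) * T (-1) : LaurentPolynomial ℤ) • hrel
    + ((T (-1) * T 1 + 1 : LaurentPolynomial ℤ) * hut) • (1 : H)
    + ((T (-1) * T 1 : LaurentPolynomial ℤ) * hut) • TT (cs.simple i)

theorem Ttilde_mul_simple_mul_Ttilde_simple (hT : IsHeckeBasis cs TT) {w : W} {i : B}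
    (hi : cs.IsRightDescent w i) :
    Ttilde cs TT (w * cs.simple i) * Ttilde cs TT (cs.simple i) = Ttilde cs TT w := by
  have := cs.length_mul_simple w i
  unfold CoxeterSystem.IsRightDescent at hi
  rw [Ttilde_mul_Ttilde cs TT hT, cs.simple_mul_simple_cancel_right]
  rw [cs.simple_mul_simple_cancel_right, cs.length_simple]
  omega

theorem Ttilde_mul_Ttilde_simple (hT : IsHeckeBasis cs TT) (w : W) (i : B) :
    Ttilde cs TT w * Ttilde cs TT (cs.simple i)
      = Ttilde cs TT (w * cs.simple i)
        + if cs.length (w * cs.simple i) < cs.length w then heckeXi • Ttilde cs TT w else 0 := by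
  split_ifs with hdesc
  · rw [← Ttilde_mul_simple_mul_Ttilde_simple cs TT hT hdesc, mul_assoc,
      Ttilde_simple_mul_self cs TT hT, mul_add, mul_one, mul_smul_comm]
  · have := cs.length_mul_simple w i
    rw [add_zero, Ttilde_mul_Ttilde cs TT hT (by rw [cs.length_simple]; omega)]

/-- The coordinate along `T̃_v`, as `T_v = q^{l(v)/2} T̃_v`. -/
noncomputable def tildeCoord (v : W) : H →ₗ[LaurentPolynomial ℤ] LaurentPolynomial ℤ :=
  (T (cs.length v : ℤ) : LaurentPolynomial ℤ) • TT.coord v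

theorem heckeF_eq_tildeCoord (w u v : W) :
    heckeF cs TT w u v = tildeCoord cs TT v (Ttilde cs TT w * Ttilde cs TT u) := rfl

open scoped Classical in
theorem tildeCoord_Ttilde (v w : W) :
    tildeCoord cs TT v (Ttilde cs TT w) = if w = v then 1 else 0 := by
  rw [tildeCoord, Ttilde, LinearMap.smul_apply, map_smul, Module.Basis.coord_apply, TT.repr_self,
    Finsupp.single_apply]
  split_ifs with h
  · rw [h, smul_smul, ← T_add, add_neg_cancel, T_zero, one_smul]
  · simp

theorem basis_eq_smul_Ttilde (w : W) :
    TT w = (T (cs.length w : ℤ) : LaurentPolynomial ℤ) • Ttilde cs TT w := by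
  rw [Ttilde, smul_smul, ← T_add, add_neg_cancel, T_zero, one_smul]

theorem tildeCoord_mul_Ttilde_simple (hT : IsHeckeBasis cs TT) (h : H) (v : W) (i : B) :
    tildeCoord cs TT v (h * Ttilde cs TT (cs.simple i))
      = tildeCoord cs TT (v * cs.simple i) h
        + if cs.length (v * cs.simple i) < cs.length v then heckeXi * tildeCoord cs TT v h
          else 0 := by
  suffices hlin : (tildeCoord cs TT v).comp (LinearMap.mulRight _ (Ttilde cs TT (cs.simple i)))
      = tildeCoord cs TT (v * cs.simple i)
        + if cs.length (v * cs.simple i) < cs.length v then heckeXi • tildeCoord cs TT v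
          else 0 by
    have := LinearMap.congr_fun hlin h
    split_ifs at this ⊢ <;> simpa using this
  refine TT.ext fun w => ?_
  rw [basis_eq_smul_Ttilde cs TT w]
  simp only [LinearMap.comp_apply, LinearMap.mulRight_apply, map_smul, LinearMap.add_apply,
    Ttilde_mul_Ttilde_simple cs TT hT, map_add, tildeCoord_Ttilde]
  have hiff : w * cs.simple i = v ↔ w = v * cs.simple i := by
    constructor <;> rintro rfl <;> simp [cs.simple_mul_simple_cancel_right]
  by_cases hwv : w = v
  · subst hwv
    have hne : w * cs.simple i ≠ w := fun h => cs.length_mul_simple_ne w i (congrArg _ h)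
    rw [if_neg hne, if_neg hne.symm]
    split_ifs <;> simp [tildeCoord_Ttilde]
  · split_ifs <;> simp_all [tildeCoord_Ttilde]

def HasNonnegTildeCoords (h : H) : Prop := ∀ v, NonnegInXi (tildeCoord cs TT v h)

theorem hasNonnegTildeCoords_Ttilde (w : W) : HasNonnegTildeCoords cs TT (Ttilde cs TT w) := by
  intro v
  rw [tildeCoord_Ttilde]
  split_ifs
  exacts [NonnegInXi.one, NonnegInXi.zero]

theorem HasNonnegTildeCoords.mul_Ttilde_simple (hT : IsHeckeBasis cs TT) {h : H}
    (hh : HasNonnegTildeCoords cs TT h) (i : B) :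
    HasNonnegTildeCoords cs TT (h * Ttilde cs TT (cs.simple i)) := by
  intro v
  rw [tildeCoord_mul_Ttilde_simple cs TT hT]
  split_ifs
  exacts [(hh _).add (hh v).heckeXi_mul, (hh _).add NonnegInXi.zero]

theorem HasNonnegTildeCoords.mul_Ttilde (hT : IsHeckeBasis cs TT) {h : H}
    (hh : HasNonnegTildeCoords cs TT h) (u : W) :
    HasNonnegTildeCoords cs TT (h * Ttilde cs TT u) := by
  induction hu : cs.length u generalizing u with
  | zero => rwa [cs.length_eq_zero_iff.mp hu, Ttilde_one cs TT hT, mul_one]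
  | succ n ih =>
    obtain ⟨i, hi⟩ := cs.exists_rightDescent_of_ne_one (w := u) fun h1 => by simp [h1] at hu
    have := cs.length_mul_simple u i
    unfold CoxeterSystem.IsRightDescent at hi
    rw [← Ttilde_mul_simple_mul_Ttilde_simple cs TT hT hi, ← mul_assoc]
    exact (ih _ (by omega)).mul_Ttilde_simple cs TT hT i

theorem PosCoeffInXi.tildeCoord_mul_Ttilde_wordProd (hT : IsHeckeBasis cs TT) {h : H}
    (hh : HasNonnegTildeCoords cs TT h) {v : W} {k : ℕ}
    (hk : PosCoeffInXi k (tildeCoord cs TT v h)) {ω : List B} (hω : cs.IsReduced ω)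
    (hdesc : ∀ i ∈ ω, cs.IsRightDescent v i) :
    PosCoeffInXi (k + ω.length) (tildeCoord cs TT v (h * Ttilde cs TT (cs.wordProd ω))) := by
  induction ω generalizing h k with
  | nil => rwa [cs.wordProd_nil, Ttilde_one cs TT hT, mul_one]
  | cons i ω ih =>
    have hω' : cs.IsReduced ω := hω.drop 1
    have hsplit : Ttilde cs TT (cs.wordProd (i :: ω))
        = Ttilde cs TT (cs.simple i) * Ttilde cs TT (cs.wordProd ω) := by
      rw [cs.wordProd_cons, Ttilde_mul_Ttilde cs TT hT]
      rw [← cs.wordProd_cons, hω.eq, hω'.eq, cs.length_simple, List.length_cons, add_comm]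
    rw [hsplit, ← mul_assoc, List.length_cons, ← add_assoc, add_right_comm]
    refine ih (hh.mul_Ttilde_simple cs TT hT i) ?_ hω' fun j hj =>
      hdesc j (List.mem_cons_of_mem _ hj)
    have hi : cs.length (v * cs.simple i) < cs.length v := hdesc i List.mem_cons_self
    rw [tildeCoord_mul_Ttilde_simple cs TT hT, if_pos hi, add_comm (tildeCoord cs TT _ h)]
    exact hk.heckeXi_mul.add_nonnegInXi (hh (v * cs.simple i))

theorem posCoeffInXi_heckeF_of_isLongest (hT : IsHeckeBasis cs TT) (I : Set B) {w0 : W}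
    (hmem : w0 ∈ Subgroup.closure (cs.simple '' I))
    (hmax : ∀ u ∈ Subgroup.closure (cs.simple '' I), cs.length u ≤ cs.length w0) :
    PosCoeffInXi (cs.length w0) (heckeF cs TT w0 w0⁻¹ w0) := by
  obtain ⟨ω, hω, hωI, hω_eq⟩ := cs.exists_isReduced_of_mem_closure (inv_mem hmem)
  have hdesc : ∀ i ∈ ω, cs.IsRightDescent w0 i := fun i hi =>
    lt_of_le_of_ne (hmax _ (mul_mem hmem (Subgroup.subset_closure ⟨i, hωI i hi, rfl⟩)))
      (cs.length_mul_simple_ne w0 i)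
  have hstart : PosCoeffInXi 0 (tildeCoord cs TT w0 (Ttilde cs TT w0)) := by
    rw [tildeCoord_Ttilde, if_pos rfl]
    exact posCoeffInXi_zero_one
  have := hstart.tildeCoord_mul_Ttilde_wordProd cs TT hT (hasNonnegTildeCoords_Ttilde cs TT w0)
    hω hdesc
  rwa [zero_add, ← hω.eq, hω_eq, cs.length_inv] at this

theorem Ttilde_inv_mul_Ttilde_of_simple_mul (hT : IsHeckeBasis cs TT) {x : W} {i : B}
    (h : cs.length (cs.simple i * x) = cs.length x + 1) :
    Ttilde cs TT (cs.simple i * x)⁻¹ * Ttilde cs TT (cs.simple i * x)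
      = Ttilde cs TT x⁻¹ * Ttilde cs TT x
        + heckeXi • (Ttilde cs TT (cs.simple i * x)⁻¹ * Ttilde cs TT x) := by
  have hleft : Ttilde cs TT (cs.simple i) * Ttilde cs TT x = Ttilde cs TT (cs.simple i * x) :=
    Ttilde_mul_Ttilde cs TT hT (by rw [h, cs.length_simple, add_comm])
  have hright : Ttilde cs TT x⁻¹ * Ttilde cs TT (cs.simple i)
      = Ttilde cs TT (cs.simple i * x)⁻¹ := by
    rw [mul_inv_rev, cs.inv_simple, Ttilde_mul_Ttilde cs TT hT]
    rw [← cs.length_inv, mul_inv_rev, inv_inv, cs.inv_simple, h, cs.length_inv, cs.length_simple]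
  calc Ttilde cs TT (cs.simple i * x)⁻¹ * Ttilde cs TT (cs.simple i * x)
      = Ttilde cs TT x⁻¹ * (Ttilde cs TT (cs.simple i) * Ttilde cs TT (cs.simple i))
          * Ttilde cs TT x := by rw [← hleft, ← hright]; simp only [mul_assoc]
    _ = _ := by
      rw [Ttilde_simple_mul_self cs TT hT, mul_add, add_mul, mul_one, mul_smul_comm,
        smul_mul_assoc, hright]

theorem PosCoeffInXi.heckeF_inv_self (hT : IsHeckeBasis cs TT) {w0 : W} {k : ℕ}
    (h0 : PosCoeffInXi k (heckeF cs TT w0 w0⁻¹ w0)) {x : W}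
    (hx : cs.length (x * w0) + cs.length w0 = cs.length x) :
    PosCoeffInXi k (heckeF cs TT x⁻¹ x w0) := by
  induction hn : cs.length (x * w0) generalizing x with
  | zero =>
    obtain rfl : x = w0⁻¹ := eq_inv_of_mul_eq_one_left (cs.length_eq_zero_iff.mp hn)
    rwa [inv_inv]
  | succ n ih =>
    obtain ⟨i, hi⟩ := cs.exists_leftDescent_of_ne_one (w := x * w0) fun h1 => by simp [h1] at hn
    obtain ⟨x, rfl⟩ : ∃ x', x = cs.simple i * x' :=
      ⟨cs.simple i * x, (cs.simple_mul_simple_cancel_left i).symm⟩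
    unfold CoxeterSystem.IsLeftDescent at hi
    rw [mul_assoc, cs.simple_mul_simple_cancel_left] at hi
    have h1 := cs.length_simple_mul (x * w0) i
    have h2 := cs.length_simple_mul x i
    have h3 := cs.length_le_length_mul_add_right x w0
    rw [mul_assoc] at hn hx
    rw [heckeF_eq_tildeCoord, Ttilde_inv_mul_Ttilde_of_simple_mul cs TT hT (by omega), map_add,
      map_smul, smul_eq_mul]
    exact (ih (by omega) (by omega)).add_nonnegInXi
      (((hasNonnegTildeCoords_Ttilde cs TT _).mul_Ttilde cs TT hT x w0).heckeXi_mul)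

end HeckeAlgebra

theorem stmt_14_general {B W H : Type*} [Group W] [Ring H] [Algebra (LaurentPolynomial ℤ) H]
    {M : CoxeterMatrix B} (cs : CoxeterSystem M W)
    (TT : Module.Basis W (LaurentPolynomial ℤ) H) (hT : IsHeckeBasis cs TT)
    (I : Set B)
    (w0 : W) (hmem : w0 ∈ Subgroup.closure (cs.simple '' I))
    (hmax : ∀ u ∈ Subgroup.closure (cs.simple '' I), cs.length u ≤ cs.length w0)
    (hbound : ∀ w u v : W, ∃ p : Polynomial ℤ, p.natDegree ≤ cs.length w0 ∧
      Polynomial.aeval heckeXi p = heckeF cs TT w u v)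
    (x : W) (hx : cs.length (x * w0) + cs.length w0 = cs.length x) :
    (∃ p : Polynomial ℤ, p.degree = (cs.length w0 : WithBot ℕ) ∧
      Polynomial.aeval heckeXi p = heckeF cs TT x⁻¹ x w0) ∧
    heckeF cs TT x⁻¹ x w0 ≠ 0 := by
  have hpos : PosCoeffInXi (cs.length w0) (heckeF cs TT x⁻¹ x w0) :=
    (posCoeffInXi_heckeF_of_isLongest cs TT hT I hmem hmax).heckeF_inv_self cs TT hT hx
  obtain ⟨p, hp, hpf⟩ := hbound x⁻¹ x w0
  exact ⟨⟨p, hpos.degree_eq hp hpf, hpf⟩, hpos.ne_zero⟩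

/-- Let `w₀` be the longest element of a finite standard parabolic subgroup
`P = W_I` of `W`, and assume that the degree of `f_{w,u,v}` as a polynomial in `ξ` is at most
`l(w₀)` for all `w, u, v ∈ W`.  Then for every `x ∈ W` with `l(x w₀) = l(x) - l(w₀)`, the
polynomial `f_{x⁻¹, x, w₀}` has degree exactly `l(w₀)` in `ξ`; in particular
`f_{x⁻¹, x, w₀} ≠ 0`. -/
theorem stmt_14 {B W H : Type*} [Group W] [Ring H] [Algebra (LaurentPolynomial ℤ) H]
    {M : CoxeterMatrix B} (cs : CoxeterSystem M W)
    (TT : Module.Basis W (LaurentPolynomial ℤ) H) (hT : IsHeckeBasis cs TT)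
    (I : Set B) (hfin : (Subgroup.closure (cs.simple '' I) : Set W).Finite)
    (w0 : W) (hmem : w0 ∈ Subgroup.closure (cs.simple '' I))
    (hmax : ∀ u ∈ Subgroup.closure (cs.simple '' I), cs.length u ≤ cs.length w0)
    (hbound : ∀ w u v : W, ∃ p : Polynomial ℤ, p.natDegree ≤ cs.length w0 ∧
      Polynomial.aeval heckeXi p = heckeF cs TT w u v)
    (x : W) (hx : cs.length (x * w0) + cs.length w0 = cs.length x) :
    (∃ p : Polynomial ℤ, p.degree = (cs.length w0 : WithBot ℕ) ∧
      Polynomial.aeval heckeXi p = heckeF cs TT x⁻¹ x w0) ∧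
    heckeF cs TT x⁻¹ x w0 ≠ 0 :=
  stmt_14_general cs TT hT I w0 hmem hmax hbound x hx
end

section
/- Let m ≥ 3 be an integer and let (W,S) be a Coxeter system in which, for any two distinct simple reflections s, t ∈ S, the order of st is either m or infinite. If an element w ∈ W admits two distinct reduced expressions, then there exist x, y ∈ W and distinct simple reflections s, t ∈ S with st of order m such that w = x u y and l(w) = l(x) + l(u) + l(y), where u is the longest element of the (finite dihedral) standard parabolic subgroup generated by s and t. -/
/-!
If `w` has two distinct reduced words, strip their longest common suffix: the two words then end
in different letters `i ≠ j`, which are both right descents of the resulting prefix of `w`.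
Tits' sign cocycle shows that the parity of the number of occurrences of a reflection `t` in the
right inversion sequence of a word depends only on its product; this gives the exchange condition
(every right descent `s i` of `π ω` occurs in the right inversion sequence of `ω`, reduced or not).
Applying it repeatedly, both alternating words in `i, j` of every length `k` can be split off on
the right of `w`, as long as `(s i * s j) ^ n ≠ 1` for `0 < n < k`. Hence `s i * s j` has finite
order, necessarily `m`, and the alternating word of length `m`, which is the longest element of
the dihedral group `⟨s i, s j⟩`, is a right factor of `w` with lengths adding up.
-/

namespace CoxeterSystem

open List

open scoped Classical

variable {B W : Type*} [Group W] {M : CoxeterMatrix B} (cs : CoxeterSystem M W)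

local prefix:100 "s" => cs.simple
local prefix:100 "π" => cs.wordProd
local prefix:100 "ℓ" => cs.length
local prefix:100 "ris" => cs.rightInvSeq

theorem inv_simple_mul_simple (i j : B) : (s i * s j)⁻¹ = s j * s i := by
  rw [mul_inv_rev, inv_simple, inv_simple]

theorem simple_mul_simple_pow_eq_one_comm (i j : B) (n : ℕ) :
    (s j * s i) ^ n = 1 ↔ (s i * s j) ^ n = 1 := by
  rw [← inv_simple_mul_simple, inv_pow, inv_eq_one]

theorem wordProd_alternatingWord_inv_mul (i j : B) (n : ℕ) :
    (π (alternatingWord j i n))⁻¹ * π (alternatingWord i j n) = (s i * s j) ^ n := by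
  induction n generalizing i j with
  | zero => simp [alternatingWord]
  | succ n ih =>
    rw [alternatingWord_succ, alternatingWord_succ, wordProd_concat, wordProd_concat, mul_inv_rev,
      inv_simple, mul_assoc, ← mul_assoc _ _ (s j), ← inv_inv (π (alternatingWord j i n)),
      ← mul_inv_rev, ih, ← inv_pow, inv_simple_mul_simple, ← mul_assoc, ← mul_pow_mul,
      mul_assoc, pow_succ]

theorem wordProd_alternatingWord_inv_mul_succ (i j : B) (n : ℕ) :
    (π (alternatingWord i j n))⁻¹ * π (alternatingWord i j (n + 1)) = (s j * s i) ^ n * s j := by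
  rw [alternatingWord_succ, wordProd_concat, ← mul_assoc, ← inv_inv (π (alternatingWord j i n)),
    ← mul_inv_rev, wordProd_alternatingWord_inv_mul, ← inv_pow, inv_simple_mul_simple]

theorem wordProd_alternatingWord_comm_of_pow_eq_one {i j : B} {n : ℕ} (h : (s i * s j) ^ n = 1) :
    π (alternatingWord i j n) = π (alternatingWord j i n) := by
  rw [eq_comm, ← inv_mul_eq_one, wordProd_alternatingWord_inv_mul, h]

theorem wordProd_alternatingWord_add_two_of_pow_succ_eq_one {i j : B} {n : ℕ}
    (h : (s i * s j) ^ (n + 1) = 1) :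
    π (alternatingWord i j (n + 2)) = π (alternatingWord j i n) := by
  rw [alternatingWord_succ, wordProd_concat, ← wordProd_alternatingWord_comm_of_pow_eq_one cs h,
    alternatingWord_succ, wordProd_concat, simple_mul_simple_cancel_right]

theorem wordProd_alternatingWord_mem_closure (i j : B) (k : ℕ) :
    π (alternatingWord i j k) ∈ Subgroup.closure {s i, s j} := by
  induction k generalizing i j with
  | zero => exact one_mem _
  | succ k ih =>
    rw [alternatingWord_succ, wordProd_concat, Set.pair_comm]
    exact mul_mem (ih j i) (Subgroup.subset_closure (Set.mem_insert _ _))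

theorem exists_wordProd_alternatingWord_mul_simple {i j : B} {n : ℕ} (hn : n ≠ 0)
    (h : (s i * s j) ^ n = 1) {k : ℕ} (hk : k ≤ n) {z : B} (hz : z = i ∨ z = j) :
    ∃ k' ≤ n, π (alternatingWord i j k) * s z = π (alternatingWord i j k') ∨
      π (alternatingWord i j k) * s z = π (alternatingWord j i k') := by
  have hji : (s j * s i) ^ n = 1 := (simple_mul_simple_pow_eq_one_comm cs i j n).mpr h
  rcases hz with rfl | rfl
  · rw [← wordProd_concat, ← alternatingWord_succ]
    obtain hk | rfl := hk.lt_or_eq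
    · exact ⟨k + 1, hk, Or.inr rfl⟩
    · obtain ⟨p, rfl⟩ := Nat.exists_eq_succ_of_ne_zero hn
      exact ⟨p, by omega, Or.inl (wordProd_alternatingWord_add_two_of_pow_succ_eq_one cs hji)⟩
  · cases k with
    | zero => exact ⟨1, by omega, Or.inl (by simp [alternatingWord])⟩
    | succ p =>
      refine ⟨p, by omega, Or.inr ?_⟩
      rw [alternatingWord_succ, wordProd_concat, simple_mul_simple_cancel_right]

theorem exists_alternatingWord_of_mem_closure {i j : B} {n : ℕ} (hn : n ≠ 0)
    (h : (s i * s j) ^ n = 1) {v : W} (hv : v ∈ Subgroup.closure {s i, s j}) :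
    ∃ k ≤ n, v = π (alternatingWord i j k) ∨ v = π (alternatingWord j i k) := by
  have hji : (s j * s i) ^ n = 1 := (simple_mul_simple_pow_eq_one_comm cs i j n).mpr h
  have step : ∀ v, (∃ k ≤ n, v = π (alternatingWord i j k) ∨ v = π (alternatingWord j i k)) →
      ∀ x ∈ ({s i, s j} : Set W),
        ∃ k ≤ n, v * x = π (alternatingWord i j k) ∨ v * x = π (alternatingWord j i k) := by
    rintro v ⟨k, hk, rfl | rfl⟩ x hx <;> obtain ⟨z, hz, rfl⟩ : ∃ z, (z = i ∨ z = j) ∧ x = s z := by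
      rcases hx with rfl | rfl <;> simp
    · exact exists_wordProd_alternatingWord_mul_simple cs hn h hk hz
    · obtain ⟨k', hk', h'⟩ := exists_wordProd_alternatingWord_mul_simple cs hn hji hk hz.symm
      exact ⟨k', hk', h'.symm⟩
  induction hv using Subgroup.closure_induction_right with
  | one => exact ⟨0, by omega, Or.inl rfl⟩
  | mul_right v _ x hx ih => exact step v ih x hx
  | mul_inv_cancel v _ x hx ih =>
    obtain ⟨z, -, rfl⟩ : ∃ z, x = s z := by rcases hx with rfl | rfl <;> simp
    rw [inv_simple]
    exact step v ih _ hx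

theorem length_le_of_mem_closure {i j : B} {n : ℕ} (hn : n ≠ 0) (h : (s i * s j) ^ n = 1)
    {v : W} (hv : v ∈ Subgroup.closure {s i, s j}) : ℓ v ≤ n := by
  obtain ⟨k, hk, rfl | rfl⟩ := exists_alternatingWord_of_mem_closure cs hn h hv <;>
    exact (cs.length_wordProd_le _).trans (by rwa [length_alternatingWord])

theorem rightInvSeq_alternatingWord (i j : B) (n : ℕ) :
    ris (alternatingWord i j n) = ((range n).map fun k ↦ (s j * s i) ^ k * s j).reverse := by
  induction n with
  | zero => rfl
  | succ n ih =>
    rw [range_succ, map_append, reverse_append, ← ih, map_singleton, reverse_singleton,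
      singleton_append, ← wordProd_alternatingWord_inv_mul_succ, alternatingWord_succ' i j n,
      rightInvSeq, wordProd_cons, mul_assoc]

theorem rightInvSeq_append (ω ω' : List B) :
    ris (ω ++ ω') = (ris ω).map (fun t ↦ (π ω')⁻¹ * t * π ω') ++ ris ω' := by
  induction ω with
  | nil => rfl
  | cons i ω ih =>
    simp only [cons_append, rightInvSeq, ih, map_cons, wordProd_append, mul_inv_rev]
    group

theorem even_count_rightInvSeq_alternatingWord {i j : B} {p : ℕ} (h : (s j * s i) ^ p = 1)
    (t : W) : Even ((ris (alternatingWord i j (2 * p))).count t) := by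
  have hperiodic : ((range p).map fun k ↦ p + k).map (fun k ↦ (s j * s i) ^ k * s j) =
      (range p).map fun k ↦ (s j * s i) ^ k * s j := by
    simp [pow_add, h]
  rw [rightInvSeq_alternatingWord, count_reverse, two_mul, range_add, map_append, hperiodic,
    count_append]
  exact ⟨_, rfl⟩

noncomputable def signPerm (i : B) : Equiv.Perm (W × ZMod 2) :=
  Function.Involutive.toPerm (fun p ↦ (s i * p.1 * s i, p.2 + if p.1 = s i then 1 else 0)) <| by
    rintro ⟨t, ε⟩
    have hconj : s i * (s i * t * s i) * s i = t := by
      simp only [← mul_assoc, simple_mul_simple_self, one_mul, simple_mul_simple_cancel_right]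
    have hfix : s i * t * s i = s i ↔ t = s i := by
      rw [mul_assoc, mul_eq_left, mul_eq_one_iff_eq_inv, inv_simple]
    simp only [hconj, hfix, Prod.mk.injEq, true_and]
    split_ifs <;> simp [add_assoc, CharTwo.add_self_eq_zero]

theorem signPerm_apply (i : B) (p : W × ZMod 2) :
    cs.signPerm i p = (s i * p.1 * s i, p.2 + if p.1 = s i then 1 else 0) := rfl

theorem prod_map_signPerm_apply (ω : List B) (p : W × ZMod 2) :
    (ω.map cs.signPerm).prod p = (π ω * p.1 * (π ω)⁻¹, p.2 + (ris ω).count p.1) := by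
  induction ω with
  | nil => simp
  | cons i ω ih =>
    have hiff : π ω * p.1 * (π ω)⁻¹ = s i ↔ (π ω)⁻¹ * s i * π ω = p.1 := by
      constructor <;> intro h <;> rw [← h] <;> group
    rw [map_cons, prod_cons, Equiv.Perm.mul_apply, ih, signPerm_apply]
    simp only [rightInvSeq, count_cons, wordProd_cons, mul_inv_rev, inv_simple, hiff, beq_iff_eq]
    refine Prod.ext (by group) ?_
    split_ifs <;> simp [add_assoc]

theorem alternatingWord_two_mul_succ (i j : B) (k : ℕ) :
    alternatingWord i j (2 * (k + 1)) = alternatingWord i j (2 * k) ++ [i, j] := by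
  rw [mul_add_one, alternatingWord_succ, alternatingWord_succ]
  simp

theorem isLiftable_signPerm : M.IsLiftable cs.signPerm := by
  intro i j
  have hpow : ∀ k, (cs.signPerm i * cs.signPerm j) ^ k =
      ((alternatingWord i j (2 * k)).map cs.signPerm).prod := by
    intro k
    induction k with
    | zero => rfl
    | succ k ih => simp [pow_succ, ih, alternatingWord_two_mul_succ]
  ext p : 1
  have hcount := even_count_rightInvSeq_alternatingWord cs (simple_mul_simple_pow' cs i j) p.1
  rw [hpow, prod_map_signPerm_apply, (ZMod.natCast_eq_zero_iff_even).mpr hcount]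
  simp [prod_alternatingWord_eq_mul_pow]

noncomputable def signRep : W →* Equiv.Perm (W × ZMod 2) :=
  cs.lift ⟨cs.signPerm, cs.isLiftable_signPerm⟩

theorem signRep_wordProd (ω : List B) : cs.signRep (π ω) = (ω.map cs.signPerm).prod := by
  rw [wordProd, map_list_prod, map_map]
  congr 2
  ext1 i
  exact cs.lift_apply_simple cs.isLiftable_signPerm i

theorem cast_count_rightInvSeq_eq {ω ω' : List B} (h : π ω = π ω') (t : W) :
    ((ris ω).count t : ZMod 2) = (ris ω').count t := by
  have := congrArg (fun w ↦ (cs.signRep w (t, 0)).2) h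
  simpa [signRep_wordProd, prod_map_signPerm_apply] using this

theorem mem_rightInvSeq_of_isRightDescent {ω : List B} {i : B}
    (hi : cs.IsRightDescent (π ω) i) : s i ∈ ris ω := by
  obtain ⟨τ, hτ, hτω⟩ := cs.exists_isReduced (π ω * s i)
  have hnotMem : s i ∉ ris τ := fun hmem ↦ by
    have := (cs.isRightInversion_of_mem_rightInvSeq hτ hmem).2
    rw [← hτω, simple_mul_simple_cancel_right] at this
    exact lt_asymm this hi
  have hcount : (ris (τ.concat i)).count (s i) = 1 := by
    have hconj := count_map_of_injective (ris τ) _ (MulAut.conj (s i)).injective (s i)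
    rw [MulAut.conj_apply, mul_inv_cancel_right] at hconj
    rw [rightInvSeq_concat, concat_eq_append, count_append, hconj, count_eq_zero.mpr hnotMem]
    simp
  have hword : π (τ.concat i) = π ω := by
    rw [wordProd_concat, ← hτω, simple_mul_simple_cancel_right]
  have hodd := cs.cast_count_rightInvSeq_eq hword (s i)
  rw [hcount, Nat.cast_one] at hodd
  refine count_pos_iff.mp (Nat.pos_of_ne_zero fun h0 ↦ ?_)
  rw [h0, Nat.cast_zero] at hodd
  exact one_ne_zero hodd

theorem length_mul_inv_alternatingWord_succ {w : W} {i j : B} (hj : cs.IsRightDescent w j)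
    {k : ℕ} (hk : ℓ (w * (π (alternatingWord j i k))⁻¹) + k = ℓ w)
    (hord : ∀ n, 0 < n → n ≤ k → (s i * s j) ^ n ≠ 1) :
    ℓ (w * (π (alternatingWord i j (k + 1)))⁻¹) + (k + 1) = ℓ w := by
  obtain ⟨σ, hσ, hσw⟩ := cs.exists_isReduced (w * (π (alternatingWord j i k))⁻¹)
  have hw : π (σ ++ alternatingWord j i k) = w := by
    rw [wordProd_append, ← hσw, inv_mul_cancel_right]
  have hmem := cs.mem_rightInvSeq_of_isRightDescent (hw ▸ hj)
  -- `s j` comes either from `σ`, and then `w * (π (alternatingWord j i k))⁻¹` shortens once more,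
  -- or from the alternating word, which forces a relation `(s i * s j) ^ n = 1` with `n ≤ k`
  rw [rightInvSeq_append, mem_append, mem_map] at hmem
  rcases hmem with ⟨t, ht, hts⟩ | hmem
  · have hshort : w * (π (alternatingWord i j (k + 1)))⁻¹ = π σ * t := by
      rw [alternatingWord_succ, wordProd_concat, mul_inv_rev, inv_simple, ← hts, ← hw,
        wordProd_append]
      group
    have hlt := (cs.isRightInversion_of_mem_rightInvSeq hσ ht).2
    have hle := cs.length_le_length_mul_add_right w (π (alternatingWord i j (k + 1)))⁻¹
    have hlen := cs.length_wordProd_le (alternatingWord i j (k + 1))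
    rw [length_alternatingWord] at hlen
    rw [cs.length_inv] at hle
    rw [hshort] at hle ⊢
    rw [hσw] at hk
    omega
  · rw [rightInvSeq_alternatingWord, mem_reverse, mem_map] at hmem
    obtain ⟨n, hn, hns⟩ := hmem
    refine absurd ?_ (hord (n + 1) n.succ_pos (by simpa using hn))
    rw [pow_succ, ← mul_assoc, hns, simple_mul_simple_self]

theorem length_mul_inv_alternatingWord {w : W} {i j : B} (hi : cs.IsRightDescent w i)
    (hj : cs.IsRightDescent w j) {k : ℕ} (hord : ∀ n, 0 < n → n < k → (s i * s j) ^ n ≠ 1) :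
    ℓ (w * (π (alternatingWord i j k))⁻¹) + k = ℓ w ∧
      ℓ (w * (π (alternatingWord j i k))⁻¹) + k = ℓ w := by
  induction k with
  | zero => simp [alternatingWord]
  | succ k ih =>
    obtain ⟨hij, hji⟩ := ih fun n hn hnk ↦ hord n hn (by omega)
    refine ⟨cs.length_mul_inv_alternatingWord_succ hj hji fun n hn hnk ↦ hord n hn (by omega),
      cs.length_mul_inv_alternatingWord_succ hi hij fun n hn hnk ↦ ?_⟩
    rw [Ne, simple_mul_simple_pow_eq_one_comm]
    exact hord n hn (by omega)

theorem isOfFinOrder_simple_mul_simple {w : W} {i j : B} (hi : cs.IsRightDescent w i)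
    (hj : cs.IsRightDescent w j) : IsOfFinOrder (s i * s j) := by
  by_contra hinf
  have hord : ∀ n, 0 < n → n < ℓ w + 1 → (s i * s j) ^ n ≠ 1 := fun n hn _ hpow ↦
    hinf (isOfFinOrder_iff_pow_eq_one.mpr ⟨n, hn, hpow⟩)
  have := (cs.length_mul_inv_alternatingWord hi hj hord).1
  omega

theorem length_mul_inv_alternatingWord_orderOf {w : W} {i j : B} (hi : cs.IsRightDescent w i)
    (hj : cs.IsRightDescent w j) :
    ℓ (w * (π (alternatingWord i j (orderOf (s i * s j))))⁻¹) + orderOf (s i * s j) = ℓ w :=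
  (cs.length_mul_inv_alternatingWord hi hj fun _ hn hlt ↦ pow_ne_one_of_lt_orderOf hn.ne' hlt).1

theorem IsReduced.eq_nil_of_wordProd_eq_one {ω : List B} (hω : cs.IsReduced ω) (h : π ω = 1) :
    ω = [] :=
  eq_nil_of_length_eq_zero (by rw [← hω.eq, h, length_one])

theorem IsReduced.of_append_singleton {ω : List B} {i : B} (h : cs.IsReduced (ω ++ [i])) :
    cs.IsReduced ω := by
  simpa using h.take ω.length

theorem IsReduced.length_wordProd_append_singleton {ω : List B} {i : B}
    (h : cs.IsReduced (ω ++ [i])) : ℓ (π (ω ++ [i])) = ℓ (π ω) + 1 := by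
  rw [h.eq, (h.of_append_singleton cs).eq, length_append, length_singleton]

theorem IsReduced.isRightDescent_append_singleton {ω : List B} {i : B}
    (h : cs.IsReduced (ω ++ [i])) : cs.IsRightDescent (π (ω ++ [i])) i := by
  rw [IsRightDescent, h.length_wordProd_append_singleton, wordProd_append, wordProd_singleton,
    simple_mul_simple_cancel_right]
  exact lt_add_one _

def HasLongestDihedralFactor (m : ℕ) (w : W) : Prop :=
  ∃ (x y : W) (i j : B) (u : W), i ≠ j ∧ orderOf (s i * s j) = m ∧
    u ∈ Subgroup.closure {s i, s j} ∧ (∀ v ∈ Subgroup.closure {s i, s j}, ℓ v ≤ ℓ u) ∧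
    w = x * u * y ∧ ℓ w = ℓ x + ℓ u + ℓ y

variable {cs} in
theorem HasLongestDihedralFactor.mul {m : ℕ} {v g : W} (h : cs.HasLongestDihedralFactor m v)
    (hlen : ℓ (v * g) = ℓ v + ℓ g) : cs.HasLongestDihedralFactor m (v * g) := by
  obtain ⟨x, y, i, j, u, hij, hm, hu, hmax, rfl, hxuy⟩ := h
  refine ⟨x, y * g, i, j, u, hij, hm, hu, hmax, by group, ?_⟩
  have hle := cs.length_mul_le (x * u) (y * g)
  have hxu := cs.length_mul_le x u
  have hyg := cs.length_mul_le y g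
  rw [← mul_assoc] at hle
  omega

theorem hasLongestDihedralFactor_of_isRightDescent {m : ℕ}
    (hord : ∀ i j : B, i ≠ j → orderOf (s i * s j) = m ∨ orderOf (s i * s j) = 0)
    {w : W} {i j : B} (hij : i ≠ j) (hi : cs.IsRightDescent w i) (hj : cs.IsRightDescent w j) :
    cs.HasLongestDihedralFactor m w := by
  have hn : orderOf (s i * s j) ≠ 0 := (cs.isOfFinOrder_simple_mul_simple hi hj).orderOf_pos.ne'
  have hw := cs.length_mul_inv_alternatingWord_orderOf hi hj
  set u := π (alternatingWord i j (orderOf (s i * s j)))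
  have hu : ℓ u = orderOf (s i * s j) := by
    have hle : ℓ u ≤ _ := (cs.length_wordProd_le _).trans (length_alternatingWord i j _).le
    have hge := cs.length_le_length_mul_add_right w u⁻¹
    rw [cs.length_inv] at hge
    omega
  refine ⟨w * u⁻¹, 1, i, j, u, hij, (hord i j hij).resolve_right hn,
    cs.wordProd_alternatingWord_mem_closure i j _, fun v hv ↦ ?_, by group, ?_⟩
  · exact hu ▸ cs.length_le_of_mem_closure hn (pow_orderOf_eq_one _) hv
  · rw [length_one, hu]
    omega

theorem hasLongestDihedralFactor_of_ne {m : ℕ}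
    (hord : ∀ i j : B, i ≠ j → orderOf (s i * s j) = m ∨ orderOf (s i * s j) = 0)
    {ω ω' : List B} (hne : ω ≠ ω') (hω : cs.IsReduced ω) (hω' : cs.IsReduced ω')
    (h : π ω = π ω') : cs.HasLongestDihedralFactor m (π ω) := by
  induction ω using List.reverseRecOn generalizing ω' with
  | nil => exact absurd (hω'.eq_nil_of_wordProd_eq_one cs h.symm).symm hne
  | append_singleton ω i ih =>
    obtain rfl | ⟨ω', j, rfl⟩ := ω'.eq_nil_or_concat'
    · exact absurd (hω.eq_nil_of_wordProd_eq_one cs h) (by simp)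
    by_cases hij : i = j
    · subst hij
      have hprefix : π ω = π ω' := by simpa [wordProd_append] using h
      have := ih (fun h ↦ hne (h ▸ rfl)) (hω.of_append_singleton cs) (hω'.of_append_singleton cs)
        hprefix
      have hlen := hω.length_wordProd_append_singleton cs
      rw [wordProd_append, wordProd_singleton] at hlen ⊢
      exact this.mul (by rw [hlen, length_simple])
    · exact cs.hasLongestDihedralFactor_of_isRightDescent hord hij
        (hω.isRightDescent_append_singleton cs) (h ▸ hω'.isRightDescent_append_singleton cs)

end CoxeterSystem

theorem stmt_18_general {B W : Type*} [Group W] {M : CoxeterMatrix B} (cs : CoxeterSystem M W)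
    (m : ℕ)
    (hord : ∀ i j : B, i ≠ j → (orderOf (cs.simple i * cs.simple j) = m ∨
      orderOf (cs.simple i * cs.simple j) = 0))
    (w : W) (L1 L2 : List B) (hne : L1 ≠ L2)
    (hL1 : cs.wordProd L1 = w) (hL1len : L1.length = cs.length w)
    (hL2 : cs.wordProd L2 = w) (hL2len : L2.length = cs.length w) :
    ∃ (x y : W) (i j : B) (u : W), i ≠ j ∧ orderOf (cs.simple i * cs.simple j) = m ∧
      u ∈ Subgroup.closure {cs.simple i, cs.simple j} ∧
      (∀ v ∈ Subgroup.closure {cs.simple i, cs.simple j}, cs.length v ≤ cs.length u) ∧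
      w = x * u * y ∧ cs.length w = cs.length x + cs.length u + cs.length y := by
  subst hL1
  have hL2red : cs.IsReduced L2 := by rw [CoxeterSystem.IsReduced, hL2, hL2len]
  exact cs.hasLongestDihedralFactor_of_ne hord hne hL1len.symm hL2red hL2.symm

/-- Let `m ≥ 3` and let `(W, S)` be a Coxeter system in which, for any two
distinct simple reflections `s, t`, the order of `st` is either `m` or infinite (in Mathlib,
`orderOf x = 0` means infinite order).  If `w ∈ W` admits two distinct reduced expressions,
then there exist `x, y ∈ W` and distinct simple reflections `s_i, s_j` with `s_i s_j` of order
`m` such that `w = x u y` and `l(w) = l(x) + l(u) + l(y)`, where `u` is the longest element of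
the (finite dihedral) standard parabolic subgroup generated by `s_i` and `s_j`. -/
theorem stmt_18 {B W : Type*} [Group W] {M : CoxeterMatrix B} (cs : CoxeterSystem M W)
    (m : ℕ) (hm : 3 ≤ m)
    (hord : ∀ i j : B, i ≠ j → (orderOf (cs.simple i * cs.simple j) = m ∨
      orderOf (cs.simple i * cs.simple j) = 0))
    (w : W) (L1 L2 : List B) (hne : L1 ≠ L2)
    (hL1 : cs.wordProd L1 = w) (hL1len : L1.length = cs.length w)
    (hL2 : cs.wordProd L2 = w) (hL2len : L2.length = cs.length w) :
    ∃ (x y : W) (i j : B) (u : W), i ≠ j ∧ orderOf (cs.simple i * cs.simple j) = m ∧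
      u ∈ Subgroup.closure {cs.simple i, cs.simple j} ∧
      (∀ v ∈ Subgroup.closure {cs.simple i, cs.simple j}, cs.length v ≤ cs.length u) ∧
      w = x * u * y ∧ cs.length w = cs.length x + cs.length u + cs.length y :=
  stmt_18_general cs m hord w L1 L2 hne hL1 hL1len hL2 hL2len
end
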